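/- For every α ∈ ℕ₀: (i) for all integers k and reals R with k ≥ R > 2α + 2, P(Γ_k^{(α)} ≤ R) ≤ 3^{2α+1} R^{α+1} P(Γ_{k−2α−2} ≤ R); (ii) for all integers k and reals R with 1 ≤ k ≤ R, P(Γ_k^{(α)} ≥ R) ≤ 4^α k^α P(Γ_{k+α} ≥ R). Here Γ_j denotes a Gamma-distributed random variable with shape j and rate 1. (Comparison of the tails of the radii of the Landau-level-α Ginibre-type ensemble with Gamma tails.) -/

import Mathlib

open MeasureTheory Filter Set

noncomputable section

/-- The orthonormal generalized Laguerre polynomial `L_α^{(β)}` of degree `α`, written in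
terms of `n = α + β ≥ 0`: `√(α!/n!) · Σ_{ℓ=0}^{α} C(n, α−ℓ) (−x)^ℓ/ℓ!`. -/
def lagNorm (α n : ℕ) (x : ℝ) : ℝ :=
  Real.sqrt ((Nat.factorial α : ℝ) / (Nat.factorial n : ℝ)) *
    ∑ ℓ ∈ Finset.range (α + 1), (Nat.choose n (α - ℓ) : ℝ) * (-x) ^ ℓ / (Nat.factorial ℓ : ℝ)

/-- The probability density of `Γ_j^{(α)}`:
`x ↦ L_α^{(j−α−1)}(x)² x^{j−α−1} e^{−x}` on `(0,∞)`. -/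
def ginTypePdf (α j : ℕ) (x : ℝ) : ℝ :=
  (lagNorm α (j - 1) x) ^ 2 * x ^ ((j : ℤ) - (α : ℤ) - 1) * Real.exp (-x)

/-- The distribution function `P(Γ_j^{(α)} ≤ R)`. -/
def ginTypeCdf (α j : ℕ) (R : ℝ) : ℝ := ∫ x in Set.Ioc (0:ℝ) R, ginTypePdf α j x

/-- The distribution function of a Gamma random variable with shape `j ≥ 1` and rate `1`. -/
def gammaCdf (j : ℕ) (R : ℝ) : ℝ :=
  (1 / (Nat.factorial (j - 1) : ℝ)) * ∫ x in Set.Ioc (0:ℝ) R, x ^ (j - 1) * Real.exp (-x)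

/-!
Write `lagNorm α n x = √(α!/n!) · ∑ cₗ xˡ`. Expanding the square, the density of `Γ_{n+1}^{(α)}`
is a finite combination of the functions `xᵖ e⁻ˣ`, so its mass is
`α!/n! · ∑_{ℓ,m} cₗ cₘ (n+ℓ+m-α)!`. Summing over `m` first, Chu–Vandermonde in the binomial ring
`ℤ` turns the inner sum into `q! · (n-q-1 choose α)` with `q = n+ℓ-α`. For `ℓ < α` this vanishes,
as `0 ≤ n-q-1 < α`, and for `ℓ = α` it is `(-1)^α n!`; so the mass is `1`, which is what the upper
tail needs.

Both tail bounds are then pointwise comparisons of densities: `|∑ cₗ xˡ| ≤ (x+n)^α/α!`, which is at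
most `(2x)^α/α!` for `x ≥ n` and `(2k)^α/α!` for `x ≤ k`. What remains are two factorial
inequalities; the lower-tail one reduces by induction on `k` to `k = 2α+3`, which follows by
induction on `α` from `(1 + 2/m)^m ≤ e² < 8`.
-/

open Finset
open scoped Nat

lemma sum_neg_one_pow_mul_choose_mul_add_choose (n q α : ℕ) :
    ∑ m ∈ range (α + 1), (-1 : ℤ) ^ m * n.choose (α - m) * (q + m).choose m =
      Ring.choose ((n : ℤ) - q - 1) α := by
  rw [show (n : ℤ) - q - 1 = -(q + 1 : ℤ) + n by ring,
    Ring.add_choose_eq α (Commute.all _ _), Nat.sum_antidiagonal_eq_sum_range_succ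
      (fun i j => Ring.choose (-(q + 1 : ℤ)) i * Ring.choose (n : ℤ) j)]
  refine sum_congr rfl fun m _ => ?_
  rw [Ring.choose_neg, show (q + 1 : ℤ) + m - 1 = ((q + m : ℕ) : ℤ) by push_cast; ring,
    Ring.choose_natCast, Ring.choose_natCast, Units.smul_def, Int.coe_negOnePow_natCast,
    smul_eq_mul]
  ring

def lagCoeff (α n ℓ : ℕ) : ℝ := n.choose (α - ℓ) * (-1) ^ ℓ / ℓ !

lemma lagCoeff_eq_zero {α n ℓ : ℕ} (h : n < α - ℓ) : lagCoeff α n ℓ = 0 := by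
  simp [lagCoeff, Nat.choose_eq_zero_of_lt h]

lemma sum_lagCoeff_mul_factorial (α n q : ℕ) :
    ∑ m ∈ range (α + 1), lagCoeff α n m * (q + m)! = q ! * Ring.choose ((n : ℤ) - q - 1) α := by
  rw [← sum_neg_one_pow_mul_choose_mul_add_choose, Int.cast_sum, mul_sum]
  refine sum_congr rfl fun m _ => ?_
  rw [← Nat.add_choose_mul_factorial_mul_factorial q m, lagCoeff]
  push_cast
  field_simp

lemma sum_sum_lagCoeff_mul_factorial (α n : ℕ) :
    ∑ ℓ ∈ range (α + 1), ∑ m ∈ range (α + 1),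
      lagCoeff α n ℓ * lagCoeff α n m * (n + ℓ + m - α)! = n ! / α ! := by
  simp_rw [mul_assoc, ← mul_sum]
  rw [sum_eq_single_of_mem α (self_mem_range_succ α)]
  · have h : ∀ m, n + α + m - α = n + m := by omega
    simp only [h]
    rw [sum_lagCoeff_mul_factorial, show (n : ℤ) - n - 1 = -1 by ring, Ring.choose_neg, lagCoeff,
      show (1 : ℤ) + α - 1 = ((α : ℕ) : ℤ) by ring, Ring.choose_natCast, Nat.choose_self,
      Units.smul_def, Int.coe_negOnePow_natCast, smul_eq_mul, Nat.sub_self, Nat.choose_zero_right]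
    push_cast
    have hsq : ((-1 : ℝ) ^ α) * (-1) ^ α = 1 := by rw [← mul_pow]; norm_num
    field_simp
    linear_combination hsq
  · intro ℓ hℓ hℓα
    have := mem_range.mp hℓ
    rcases le_or_gt α (n + ℓ) with hle | hlt
    · obtain ⟨q, hq⟩ : ∃ q, n + ℓ = q + α := ⟨n + ℓ - α, by omega⟩
      have h : ∀ m, n + ℓ + m - α = q + m := by omega
      simp only [h]
      rw [sum_lagCoeff_mul_factorial, show (n : ℤ) - q - 1 = ((α - ℓ - 1 : ℕ) : ℤ) by omega,
        Ring.choose_natCast, Nat.choose_eq_zero_of_lt (by omega)]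
      simp
    · rw [lagCoeff_eq_zero (by omega), zero_mul]

lemma integrableOn_pow_mul_exp_neg (p : ℕ) :
    IntegrableOn (fun x : ℝ => x ^ p * Real.exp (-x)) (Ioi 0) := by
  refine (Real.GammaIntegral_convergent (s := p + 1) (by positivity)).congr_fun
    (fun x _ => ?_) measurableSet_Ioi
  simp [mul_comm]

lemma integral_pow_mul_exp_neg (p : ℕ) : ∫ x in Ioi (0 : ℝ), x ^ p * Real.exp (-x) = p ! := by
  rw [← Real.Gamma_nat_eq_factorial, Real.Gamma_eq_integral (by positivity)]
  refine setIntegral_congr_fun measurableSet_Ioi fun x _ => ?_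
  simp [mul_comm]

lemma lagNorm_eq (α n : ℕ) (x : ℝ) :
    lagNorm α n x = √(α ! / n !) * ∑ ℓ ∈ range (α + 1), lagCoeff α n ℓ * x ^ ℓ := by
  rw [lagNorm]
  congr 1
  refine sum_congr rfl fun ℓ _ => ?_
  rw [lagCoeff, neg_pow]
  ring

lemma ginTypePdf_succ (α n : ℕ) (x : ℝ) :
    ginTypePdf α (n + 1) x = lagNorm α n x ^ 2 * x ^ ((n : ℤ) - α) * Real.exp (-x) := by
  rw [ginTypePdf, Nat.add_sub_cancel]
  push_cast
  ring_nf

-- The exponent `n + ℓ + m - α` is truncated only in terms where `lagCoeff α n ℓ = 0`.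
lemma ginTypePdf_succ_eq_sum (α n : ℕ) {x : ℝ} (hx : 0 < x) :
    ginTypePdf α (n + 1) x = α ! / n ! * ∑ ℓ ∈ range (α + 1), ∑ m ∈ range (α + 1),
      lagCoeff α n ℓ * lagCoeff α n m * (x ^ (n + ℓ + m - α) * Real.exp (-x)) := by
  rw [ginTypePdf_succ, lagNorm_eq, mul_pow, Real.sq_sqrt (by positivity), sq, sum_mul_sum,
    mul_assoc, mul_assoc]
  congr 1
  simp_rw [sum_mul]
  refine sum_congr rfl fun ℓ _ => sum_congr rfl fun m _ => ?_
  rcases lt_or_ge n (α - ℓ) with hlt | hle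
  · simp [lagCoeff_eq_zero hlt]
  · have hpow : x ^ ℓ * x ^ m * x ^ ((n : ℤ) - α) = x ^ (n + ℓ + m - α) := by
      rw [← zpow_natCast, ← zpow_natCast, ← zpow_add₀ hx.ne', ← zpow_add₀ hx.ne', ← zpow_natCast]
      congr 1
      omega
    rw [← hpow]
    ring

lemma integrableOn_ginTypePdf_succ (α n : ℕ) : IntegrableOn (ginTypePdf α (n + 1)) (Ioi 0) := by
  refine IntegrableOn.congr_fun ?_ (fun x hx => (ginTypePdf_succ_eq_sum α n hx).symm)
    measurableSet_Ioi
  exact (integrable_finsetSum _ fun ℓ _ => integrable_finsetSum _ fun m _ =>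
    (integrableOn_pow_mul_exp_neg _).const_mul _).const_mul _

lemma integral_ginTypePdf_succ (α n : ℕ) : ∫ x in Ioi 0, ginTypePdf α (n + 1) x = 1 := by
  rw [setIntegral_congr_fun measurableSet_Ioi fun x hx => ginTypePdf_succ_eq_sum α n hx,
    integral_const_mul, integral_finsetSum _ fun ℓ _ => integrable_finsetSum _ fun m _ =>
      (integrableOn_pow_mul_exp_neg _).const_mul _]
  simp_rw [integral_finsetSum _ fun m _ => (integrableOn_pow_mul_exp_neg _).const_mul _,
    integral_const_mul, integral_pow_mul_exp_neg, sum_sum_lagCoeff_mul_factorial]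
  field_simp

lemma integral_Ioi_sub_integral_Ioc {f : ℝ → ℝ} {a b : ℝ} (hab : a ≤ b)
    (hf : IntegrableOn f (Ioi a)) :
    (∫ x in Ioi a, f x) - ∫ x in Ioc a b, f x = ∫ x in Ioi b, f x := by
  rw [← intervalIntegral.integral_of_le hab, ← intervalIntegral.integral_Ioi_sub_Ioi hf hab]
  ring

lemma one_sub_ginTypeCdf_succ (α n : ℕ) {R : ℝ} (hR : 0 ≤ R) :
    1 - ginTypeCdf α (n + 1) R = ∫ x in Ioi R, ginTypePdf α (n + 1) x := by
  rw [← integral_ginTypePdf_succ α n, ginTypeCdf,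
    integral_Ioi_sub_integral_Ioc hR (integrableOn_ginTypePdf_succ α n)]

lemma one_sub_gammaCdf (j : ℕ) {R : ℝ} (hR : 0 ≤ R) :
    1 - gammaCdf j R = 1 / (j - 1)! * ∫ x in Ioi R, x ^ (j - 1) * Real.exp (-x) := by
  rw [gammaCdf, ← integral_Ioi_sub_integral_Ioc hR (integrableOn_pow_mul_exp_neg _),
    integral_pow_mul_exp_neg]
  field_simp

lemma setIntegral_le_mul_gamma {f : ℝ → ℝ} {s : Set ℝ} (hs : MeasurableSet s) (hs0 : s ⊆ Ioi 0)
    (hf : IntegrableOn f s) {c : ℝ} {p : ℕ}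
    (hle : ∀ x ∈ s, f x ≤ c / p ! * (x ^ p * Real.exp (-x))) :
    ∫ x in s, f x ≤ c * (1 / p ! * ∫ x in s, x ^ p * Real.exp (-x)) :=
  calc ∫ x in s, f x ≤ ∫ x in s, c / p ! * (x ^ p * Real.exp (-x)) :=
        setIntegral_mono_on hf (((integrableOn_pow_mul_exp_neg p).mono_set hs0).const_mul _) hs hle
    _ = c * (1 / p ! * ∫ x in s, x ^ p * Real.exp (-x)) := by
        rw [integral_const_mul]
        ring

lemma abs_sum_lagCoeff_mul_pow_le (α n : ℕ) {x : ℝ} (hx : 0 ≤ x) :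
    |∑ ℓ ∈ range (α + 1), lagCoeff α n ℓ * x ^ ℓ| ≤ (x + n) ^ α / α ! := by
  refine (abs_sum_le_sum_abs _ _).trans ?_
  rw [add_pow, sum_div]
  refine sum_le_sum fun ℓ hℓ => ?_
  have hℓα : ℓ ≤ α := Nat.lt_succ_iff.mp (mem_range.mp hℓ)
  have hchoose : (n.choose (α - ℓ) : ℝ) ≤ n ^ (α - ℓ) / (α - ℓ)! := Nat.choose_le_pow_div _ _
  have hfac : (α ! : ℝ) = α.choose ℓ * ℓ ! * (α - ℓ)! := by
    rw [← Nat.choose_mul_factorial_mul_factorial hℓα]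
    push_cast
    ring
  calc |lagCoeff α n ℓ * x ^ ℓ| = n.choose (α - ℓ) * x ^ ℓ / ℓ ! := by
        rw [lagCoeff, abs_mul, abs_div, abs_mul, abs_pow, abs_pow, abs_neg, abs_one, one_pow,
          abs_of_nonneg hx, Nat.abs_cast, Nat.abs_cast]
        ring
    _ ≤ n ^ (α - ℓ) / (α - ℓ)! * x ^ ℓ / ℓ ! := by gcongr
    _ = x ^ ℓ * n ^ (α - ℓ) * α.choose ℓ / α ! := by
        rw [hfac]
        have : (α.choose ℓ : ℝ) ≠ 0 := by exact_mod_cast (Nat.choose_pos hℓα).ne'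
        field_simp

lemma sq_lagNorm_le (α n : ℕ) {x : ℝ} (hx : 0 ≤ x) :
    lagNorm α n x ^ 2 ≤ (x + n) ^ (2 * α) / (α ! * n !) := by
  rw [lagNorm_eq, mul_pow, Real.sq_sqrt (by positivity), ← sq_abs (∑ ℓ ∈ _, _)]
  calc (α ! / n ! : ℝ) * |∑ ℓ ∈ range (α + 1), lagCoeff α n ℓ * x ^ ℓ| ^ 2
      ≤ α ! / n ! * ((x + n) ^ α / α !) ^ 2 := by
        gcongr
        exact abs_sum_lagCoeff_mul_pow_le α n hx
    _ = (x + n) ^ (2 * α) / (α ! * n !) := by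
        field_simp
        ring

lemma add_one_pow_mul_sub_le_pow_succ (p K : ℕ) : (K + 1) ^ p * (K - (p + 1)) ≤ K ^ (p + 1) := by
  induction p with
  | zero => simp
  | succ p ih =>
    have h : (K + 1) * (K - (p + 2)) ≤ K * (K - (p + 1)) := by
      rcases le_or_gt K (p + 1) with h | h
      · simp [show K - (p + 2) = 0 by omega]
      · obtain ⟨t, rfl⟩ : ∃ t, K = p + 2 + t := ⟨K - (p + 2), by omega⟩
        rw [show p + 2 + t - (p + 2) = t by omega, show p + 2 + t - (p + 1) = t + 1 by omega]
        nlinarith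
    calc (K + 1) ^ (p + 1) * (K - (p + 2)) = (K + 1) ^ p * ((K + 1) * (K - (p + 2))) := by ring
      _ ≤ (K + 1) ^ p * (K * (K - (p + 1))) := Nat.mul_le_mul_left _ h
      _ = (K + 1) ^ p * (K - (p + 1)) * K := by ring
      _ ≤ K ^ (p + 1) * K := Nat.mul_le_mul_right _ ih
      _ = K ^ (p + 2) := by ring

lemma add_two_pow_le_eight_mul_pow {m : ℕ} (hm : 0 < m) : (m + 2) ^ m ≤ 8 * m ^ m := by
  have hm' : (0 : ℝ) < m := by exact_mod_cast hm
  have hexp : (1 + 2 / (m : ℝ)) ^ m ≤ Real.exp 2 := by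
    have h := Real.one_sub_div_pow_le_exp_neg (n := m) (t := -2) (by linarith)
    rwa [neg_div, sub_neg_eq_add, neg_neg] at h
  have hexp8 : Real.exp 2 < 8 := by
    have h := Real.exp_one_lt_d9
    rw [show (2 : ℝ) = 1 + 1 by norm_num, Real.exp_add]
    nlinarith [Real.exp_pos 1]
  have key : ((m : ℝ) + 2) ^ m ≤ 8 * (m : ℝ) ^ m :=
    calc ((m : ℝ) + 2) ^ m = (m : ℝ) ^ m * (1 + 2 / (m : ℝ)) ^ m := by
          rw [← mul_pow]; congr 1; field_simp
      _ ≤ (m : ℝ) ^ m * 8 := by gcongr; exact hexp.trans hexp8.le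
      _ = 8 * (m : ℝ) ^ m := mul_comm _ _
  exact_mod_cast key

lemma four_pow_mul_pow_le_three_pow_mul_factorial_mul_factorial (α : ℕ) :
    4 ^ α * (2 * α + 3) ^ (2 * α + 1) ≤ 3 ^ (2 * α + 1) * α ! * (2 * α + 2)! := by
  rcases lt_or_ge α 3 with h | h
  · interval_cases α <;> norm_num [Nat.factorial]
  induction α, h using Nat.le_induction with
  | base => norm_num [Nat.factorial]
  | succ α hα ih =>
    have h8 : (2 * α + 5) ^ (2 * α + 3) ≤ 8 * (2 * α + 3) ^ (2 * α + 3) :=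
      add_two_pow_le_eight_mul_pow (m := 2 * α + 3) (by omega)
    calc 4 ^ (α + 1) * (2 * (α + 1) + 3) ^ (2 * (α + 1) + 1)
        = 4 * 4 ^ α * (2 * α + 5) ^ (2 * α + 3) := by ring_nf
      _ ≤ 4 * 4 ^ α * (8 * (2 * α + 3) ^ (2 * α + 3)) := Nat.mul_le_mul_left _ h8
      _ = 32 * (2 * α + 3) ^ 2 * (4 ^ α * (2 * α + 3) ^ (2 * α + 1)) := by ring
      _ ≤ 32 * (2 * α + 3) ^ 2 * (3 ^ (2 * α + 1) * α ! * (2 * α + 2)!) :=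
          Nat.mul_le_mul_left _ ih
      _ ≤ 9 * (α + 1) * ((2 * α + 4) * (2 * α + 3)) * (3 ^ (2 * α + 1) * α ! * (2 * α + 2)!) :=
          Nat.mul_le_mul_right _ (by nlinarith)
      _ = 3 ^ (2 * (α + 1) + 1) * (α + 1)! * (2 * (α + 1) + 2)! := by
          rw [show 2 * (α + 1) + 2 = 2 * α + 2 + 1 + 1 by ring, Nat.factorial_succ (2 * α + 2 + 1),
            Nat.factorial_succ (2 * α + 2), Nat.factorial_succ α]
          ring

lemma four_pow_mul_pow_mul_factorial_le (α m : ℕ) :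
    4 ^ α * (m + 2 * α + 3) ^ (2 * α + 1) * m ! ≤ 3 ^ (2 * α + 1) * α ! * (m + 2 * α + 2)! := by
  induction m with
  | zero => simpa using four_pow_mul_pow_le_three_pow_mul_factorial_mul_factorial α
  | succ m ih =>
    have h := add_one_pow_mul_sub_le_pow_succ (2 * α + 1) (m + 2 * α + 3)
    rw [show m + 2 * α + 3 - (2 * α + 1 + 1) = m + 1 by omega] at h
    calc 4 ^ α * (m + 1 + 2 * α + 3) ^ (2 * α + 1) * (m + 1)!
        = ((m + 2 * α + 3 + 1) ^ (2 * α + 1) * (m + 1)) * (4 ^ α * m !) := by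
          rw [Nat.factorial_succ]; ring
      _ ≤ (m + 2 * α + 3) ^ (2 * α + 1 + 1) * (4 ^ α * m !) := Nat.mul_le_mul_right _ h
      _ = (m + 2 * α + 3) * (4 ^ α * (m + 2 * α + 3) ^ (2 * α + 1) * m !) := by ring
      _ ≤ (m + 2 * α + 3) * (3 ^ (2 * α + 1) * α ! * (m + 2 * α + 2)!) :=
          Nat.mul_le_mul_left _ ih
      _ = 3 ^ (2 * α + 1) * α ! * (m + 1 + 2 * α + 2)! := by
          rw [show m + 1 + 2 * α + 2 = m + 2 * α + 2 + 1 by ring,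
            Nat.factorial_succ (m + 2 * α + 2)]
          ring

lemma factorial_add_le (α j : ℕ) : (j + α)! ≤ α ! * (j + 1) ^ α * j ! := by
  induction α with
  | zero => simp
  | succ α ih =>
    calc (j + (α + 1))! = (j + α + 1) * (j + α)! := Nat.factorial_succ _
      _ ≤ ((α + 1) * (j + 1)) * (α ! * (j + 1) ^ α * j !) := Nat.mul_le_mul (by nlinarith) ih
      _ = (α + 1)! * (j + 1) ^ (α + 1) * j ! := by rw [Nat.factorial_succ]; ring

lemma ginTypePdf_succ_le_of_le (α n : ℕ) {x : ℝ} (hx : 0 < x) (hnx : (n : ℝ) ≤ x) :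
    ginTypePdf α (n + 1) x ≤
      4 ^ α * ((n + 1 : ℕ) : ℝ) ^ α / (n + α)! * (x ^ (n + α) * Real.exp (-x)) := by
  have hfac : ((n + α)! : ℝ) ≤ α ! * ((n + 1 : ℕ) : ℝ) ^ α * n ! := by
    exact_mod_cast factorial_add_le α n
  have hpow : x ^ (2 * α) * x ^ ((n : ℤ) - α) = x ^ (n + α) := by
    rw [← zpow_natCast, ← zpow_add₀ hx.ne', ← zpow_natCast]
    push_cast
    ring_nf
  have hzpow : 0 ≤ x ^ ((n : ℤ) - α) := (zpow_pos hx _).le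
  rw [ginTypePdf_succ]
  calc lagNorm α n x ^ 2 * x ^ ((n : ℤ) - α) * Real.exp (-x)
      ≤ (x + n) ^ (2 * α) / (α ! * n !) * x ^ ((n : ℤ) - α) * Real.exp (-x) := by
        gcongr
        exact sq_lagNorm_le α n hx.le
    _ ≤ (2 * x) ^ (2 * α) / (α ! * n !) * x ^ ((n : ℤ) - α) * Real.exp (-x) := by
        gcongr
        linarith
    _ = 4 ^ α / (α ! * n !) * (x ^ (n + α) * Real.exp (-x)) := by
        rw [← hpow, mul_pow, pow_mul]
        norm_num
        ring
    _ ≤ 4 ^ α * ((n + 1 : ℕ) : ℝ) ^ α / (n + α)! * (x ^ (n + α) * Real.exp (-x)) := by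
        gcongr ?_ * _
        rw [div_le_div_iff₀ (by positivity) (by positivity)]
        calc (4 : ℝ) ^ α * (n + α)! ≤ 4 ^ α * (α ! * ((n + 1 : ℕ) : ℝ) ^ α * n !) := by gcongr
          _ = 4 ^ α * ((n + 1 : ℕ) : ℝ) ^ α * (α ! * n !) := by ring

lemma ginTypePdf_le_of_le_of_le (α m : ℕ) {x R : ℝ} (hx : 0 < x) (hxR : x ≤ R)
    (hR : R ≤ ((m + 2 * α + 2 + 1 : ℕ) : ℝ)) :
    ginTypePdf α (m + 2 * α + 2 + 1) x ≤
      3 ^ (2 * α + 1) * R ^ (α + 1) / m ! * (x ^ m * Real.exp (-x)) := by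
  set K : ℝ := ((m + 2 * α + 2 + 1 : ℕ) : ℝ) with hK
  have hfac : (4 : ℝ) ^ α * K ^ (2 * α + 1) * m ! ≤ 3 ^ (2 * α + 1) * α ! * (m + 2 * α + 2)! := by
    rw [hK]
    exact_mod_cast four_pow_mul_pow_mul_factorial_le α m
  have hpow : x ^ (((m + 2 * α + 2 : ℕ) : ℤ) - α) = x ^ m * x ^ (α + 2) := by
    rw [← pow_add, ← zpow_natCast]
    push_cast
    ring_nf
  have hRpow : 0 ≤ R ^ (α + 1) := pow_nonneg (hx.le.trans hxR) _
  have hxpow : x ^ (α + 2) ≤ R ^ (α + 1) * K :=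
    calc x ^ (α + 2) ≤ R ^ (α + 2) := by gcongr
      _ = R ^ (α + 1) * R := pow_succ _ _
      _ ≤ R ^ (α + 1) * K := by gcongr
  have hxn : x + ((m + 2 * α + 2 : ℕ) : ℝ) ≤ 2 * K := by
    have h := hxR.trans hR
    simp only [hK] at h ⊢
    push_cast at h ⊢
    linarith
  rw [ginTypePdf_succ, hpow]
  calc lagNorm α (m + 2 * α + 2) x ^ 2 * (x ^ m * x ^ (α + 2)) * Real.exp (-x)
      ≤ (x + ((m + 2 * α + 2 : ℕ) : ℝ)) ^ (2 * α) / (α ! * (m + 2 * α + 2)!) *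
          (x ^ m * (R ^ (α + 1) * K)) * Real.exp (-x) := by
        gcongr
        exact sq_lagNorm_le α _ hx.le
    _ ≤ (2 * K) ^ (2 * α) / (α ! * (m + 2 * α + 2)!) *
          (x ^ m * (R ^ (α + 1) * K)) * Real.exp (-x) := by
        gcongr
    _ = 4 ^ α * K ^ (2 * α + 1) / (α ! * (m + 2 * α + 2)!) * R ^ (α + 1) *
          (x ^ m * Real.exp (-x)) := by
        rw [mul_pow, pow_mul]
        norm_num
        ring
    _ ≤ 3 ^ (2 * α + 1) / m ! * R ^ (α + 1) * (x ^ m * Real.exp (-x)) := by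
        gcongr ?_ * _ * _
        rw [div_le_div_iff₀ (by positivity) (by positivity)]
        linarith
    _ = 3 ^ (2 * α + 1) * R ^ (α + 1) / m ! * (x ^ m * Real.exp (-x)) := by ring

/-- Comparison of the tails of the radii of the Landau-level-`α` Ginibre-type ensemble with
Gamma tails: (i) for `k ≥ R > 2α+2`,
`P(Γ_k^{(α)} ≤ R) ≤ 3^{2α+1} R^{α+1} P(Γ_{k−2α−2} ≤ R)`;
(ii) for `1 ≤ k ≤ R`, `P(Γ_k^{(α)} ≥ R) ≤ 4^α k^α P(Γ_{k+α} ≥ R)`. -/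
theorem ginibre_type_tail_comparison (α : ℕ) :
    (∀ k : ℕ, ∀ R : ℝ, (2 * (α : ℝ) + 2) < R → R ≤ (k : ℝ) →
      ginTypeCdf α k R ≤ 3 ^ (2 * α + 1) * R ^ (α + 1) * gammaCdf (k - (2 * α + 2)) R) ∧
    (∀ k : ℕ, ∀ R : ℝ, 1 ≤ k → (k : ℝ) ≤ R →
      1 - ginTypeCdf α k R ≤ 4 ^ α * (k : ℝ) ^ α * (1 - gammaCdf (k + α) R)) := by
  constructor
  · intro k R hR hRk
    obtain ⟨m, rfl⟩ : ∃ m, k = m + 2 * α + 2 + 1 := by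
      have : ((2 * α + 2 : ℕ) : ℝ) < k := by push_cast; linarith
      exact ⟨k - (2 * α + 3), by have := Nat.cast_lt.mp this; omega⟩
    rw [ginTypeCdf, gammaCdf, show m + 2 * α + 2 + 1 - (2 * α + 2) - 1 = m by omega]
    exact setIntegral_le_mul_gamma measurableSet_Ioc Ioc_subset_Ioi_self
      ((integrableOn_ginTypePdf_succ _ _).mono_set Ioc_subset_Ioi_self)
      fun x hx => ginTypePdf_le_of_le_of_le α m hx.1 hx.2 hRk
  · intro k R hk hkR
    obtain ⟨n, rfl⟩ : ∃ n, k = n + 1 := ⟨k - 1, by omega⟩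
    push_cast at hkR
    have hR : 0 ≤ R := by linarith [(n.cast_nonneg : (0 : ℝ) ≤ n)]
    rw [one_sub_ginTypeCdf_succ α n hR, one_sub_gammaCdf _ hR, show n + 1 + α - 1 = n + α by omega]
    exact setIntegral_le_mul_gamma measurableSet_Ioi (Ioi_subset_Ioi hR)
      ((integrableOn_ginTypePdf_succ α n).mono_set (Ioi_subset_Ioi hR))
      fun x hx => ginTypePdf_succ_le_of_le α n (hR.trans_lt hx) (by linarith [mem_Ioi.mp hx])

end
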